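/- Let f : ℝⁿ → ℝ ∪ {+∞} be a standard self-concordant ν-self-concordant barrier (ν > 0) on its open convex effective domain, with ∇²f(x) positive definite for all x ∈ dom f, and let g : ℝⁿ → ℝ ∪ {+∞} be proper, lower semicontinuous and convex. Let t_k, t_{k+1} > 0, d_k := t_{k+1} − t_k, and let x*_{t_k} and x*_{t_{k+1}} be the unique minimizers of F(·; t_k) and F(·; t_{k+1}) respectively, where F(x;t) := f(x) + t⁻¹g(x). Set Δ_k := ‖x*_{t_{k+1}} − x*_{t_k}‖_{x*_{t_{k+1}}} and assume Δ_k < 1. Then Δ_k/(1 + Δ_k) ≤ (|d_k|/t_k)·‖∇f(x*_{t_{k+1}})‖*_{x*_{t_{k+1}}} ≤ (|d_k|/t_k)·√ν. Consequently, if |d_k|·√ν < t_k, then Δ_k ≤ |d_k|√ν/(t_k − |d_k|√ν). -/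

import Mathlib

open RealInnerProductSpace

/-- The local norm `‖u‖_x = (uᵀ ∇²f(x) u)^(1/2)`, where `H` stands for the Hessian `∇²f(x)`. -/
noncomputable def locNorm {n : ℕ}
    (H : EuclideanSpace ℝ (Fin n) →L[ℝ] EuclideanSpace ℝ (Fin n))
    (u : EuclideanSpace ℝ (Fin n)) : ℝ :=
  Real.sqrt ⟪u, H u⟫

/-- The dual local norm `‖v‖_x* = (vᵀ (∇²f(x))⁻¹ v)^(1/2)`. -/
noncomputable def dualLocNorm {n : ℕ}
    (H : EuclideanSpace ℝ (Fin n) →L[ℝ] EuclideanSpace ℝ (Fin n))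
    (v : EuclideanSpace ℝ (Fin n)) : ℝ :=
  Real.sqrt ⟪v, H.inverse v⟫

/-- `f` is standard self-concordant on `s`: along every line, `|φ'''(τ)| ≤ 2 φ''(τ)^(3/2)`. -/
def StandardSelfConcordantOn {n : ℕ} (f : EuclideanSpace ℝ (Fin n) → ℝ)
    (s : Set (EuclideanSpace ℝ (Fin n))) : Prop :=
  ∀ x ∈ s, ∀ v : EuclideanSpace ℝ (Fin n), ∀ τ : ℝ, x + τ • v ∈ s →
    |iteratedDeriv 3 (fun r : ℝ => f (x + r • v)) τ| ≤
      2 * (iteratedDeriv 2 (fun r : ℝ => f (x + r • v)) τ) ^ ((3 : ℝ) / 2)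

/-!
Write `h = x*_{t_{k+1}} - x*_{t_k}`. Minimality of each `x*_t` for `f + t⁻¹ g`, tested along the
segment towards the other minimizer and using convexity of `g`, gives
`t_{k+1} ⟪∇f(x*_{t_{k+1}}), h⟫ ≤ t_k ⟪∇f(x*_{t_k}), h⟫`, hence
`t_k ⟪∇f(x*_{t_{k+1}}) - ∇f(x*_{t_k}), h⟫ ≤ |d_k| ‖∇f(x*_{t_{k+1}})‖* Δ_k` by Cauchy–Schwarz for
the local norm. Self-concordance bounds the left side from below: `ψ(τ) = ⟪h, ∇²f(x*_{t_k} + τh) h⟫`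
satisfies `|ψ'| ≤ 2 ψ^{3/2}`, so `ψ^{-1/2}` is `1`-Lipschitz and `ψ(τ) ≥ Δ²/(1 + Δ(1 - τ))²`;
integrating over `[0, 1]` gives `Δ²/(1 + Δ)`. Finally, the barrier inequality at
`u = ∇²f(x)⁻¹ ∇f(x)` reads `‖∇f(x)‖*² ≤ ν`.
-/

open Set

theorem le_of_hasDerivAt_of_forall_mul_le_sub {F : ℝ → ℝ} {c d : ℝ} (hF : HasDerivAt F d 0)
    (h : ∀ τ ∈ Ioc (0 : ℝ) 1, c * τ ≤ F τ - F 0) : c ≤ d := by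
  have hslope : Filter.Tendsto (slope F 0) (nhdsWithin 0 (Ioi 0)) (nhds d) :=
    (hasDerivAt_iff_tendsto_slope.mp hF).mono_left (nhdsWithin_mono _ fun _ hτ => ne_of_gt hτ)
  refine ge_of_tendsto hslope ?_
  filter_upwards [Ioc_mem_nhdsGT zero_lt_one] with τ hτ
  rw [slope_def_field, sub_zero, le_div_iff₀ hτ.1]
  exact h τ hτ

theorem iteratedDeriv_two_eqOn {F φ ψ : ℝ → ℝ} {U : Set ℝ} (hU : IsOpen U)
    (hF : ∀ r ∈ U, HasDerivAt F (φ r) r) (hφ : ∀ r ∈ U, HasDerivAt φ (ψ r) r) :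
    EqOn (iteratedDeriv 2 F) ψ U := by
  intro r hr
  have hderiv : deriv F =ᶠ[nhds r] φ :=
    Filter.eventuallyEq_of_mem (hU.mem_nhds hr) fun s hs => (hF s hs).deriv
  rw [iteratedDeriv_succ, iteratedDeriv_one, hderiv.deriv_eq, (hφ r hr).deriv]

theorem hasDerivAt_iteratedDeriv_three {F ψ : ℝ → ℝ} {U : Set ℝ} (hU : IsOpen U)
    (hF : ContDiffOn ℝ 3 F U) (hψ : EqOn (iteratedDeriv 2 F) ψ U) {r : ℝ} (hr : r ∈ U) :
    HasDerivAt ψ (iteratedDeriv 3 F r) r := by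
  have hdiff : DifferentiableAt ℝ (iteratedDeriv 2 F) r := by
    have := (hF.differentiableOn_iteratedDerivWithin (m := 2) (by norm_num) hU.uniqueDiffOn
      r hr).differentiableAt (hU.mem_nhds hr)
    exact this.congr_of_eventuallyEq
      (Filter.eventuallyEq_of_mem (hU.mem_nhds hr) (iteratedDerivWithin_of_isOpen hU)).symm
  rw [iteratedDeriv_succ]
  exact hdiff.hasDerivAt.congr_of_eventuallyEq (Filter.eventuallyEq_of_mem (hU.mem_nhds hr) hψ).symm

theorem integral_sq_div_one_add_mul_sub_sq {Δ : ℝ} (hΔ : 0 ≤ Δ) :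
    ∫ τ in (0 : ℝ)..1, Δ ^ 2 / (1 + Δ * (1 - τ)) ^ 2 = Δ ^ 2 / (1 + Δ) := by
  have hpos : ∀ τ ∈ uIcc (0 : ℝ) 1, 0 < 1 + Δ * (1 - τ) := by
    intro τ hτ
    rw [uIcc_of_le zero_le_one] at hτ
    nlinarith [hτ.2]
  have hanti : ∀ τ ∈ uIcc (0 : ℝ) 1,
      HasDerivAt (fun τ => Δ * (1 + Δ * (1 - τ))⁻¹) (Δ ^ 2 / (1 + Δ * (1 - τ)) ^ 2) τ := by
    intro τ hτ
    have hlin : HasDerivAt (fun τ : ℝ => 1 + Δ * (1 - τ)) (-Δ) τ := by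
      simpa using (((hasDerivAt_id τ).const_sub 1).const_mul Δ).const_add 1
    exact ((hlin.inv (hpos τ hτ).ne').const_mul Δ).congr_deriv (by ring)
  have hcont : ContinuousOn (fun τ : ℝ => Δ ^ 2 / (1 + Δ * (1 - τ)) ^ 2) (uIcc 0 1) :=
    continuousOn_const.div (by fun_prop) fun τ hτ => pow_ne_zero _ (hpos τ hτ).ne'
  rw [intervalIntegral.integral_eq_sub_of_hasDerivAt hanti hcont.intervalIntegrable]
  field_simp
  ring

section Gronwall

variable {ψ dψ : ℝ → ℝ} {Δ : ℝ}

theorem sq_div_one_add_mul_sub_sq_le (hpos : ∀ τ ∈ Icc (0 : ℝ) 1, 0 < ψ τ)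
    (hψ : ∀ τ ∈ Icc (0 : ℝ) 1, HasDerivAt ψ (dψ τ) τ)
    (hsc : ∀ τ ∈ Icc (0 : ℝ) 1, |dψ τ| ≤ 2 * ψ τ ^ (3 / 2 : ℝ))
    (hΔ : 0 ≤ Δ) (hψ₁ : ψ 1 = Δ ^ 2) {τ : ℝ} (hτ : τ ∈ Icc (0 : ℝ) 1) :
    Δ ^ 2 / (1 + Δ * (1 - τ)) ^ 2 ≤ ψ τ := by
  have hderiv : ∀ t ∈ Icc (0 : ℝ) 1, HasDerivAt (fun t => (√(ψ t))⁻¹)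
      (-(dψ t / (2 * √(ψ t))) / √(ψ t) ^ 2) t := fun t ht =>
    ((hψ t ht).sqrt (hpos t ht).ne').inv (Real.sqrt_ne_zero'.2 (hpos t ht))
  have hbound : ∀ t ∈ Icc (0 : ℝ) 1, ‖-(dψ t / (2 * √(ψ t))) / √(ψ t) ^ 2‖ ≤ 1 := by
    intro t ht
    have hψt := hpos t ht
    have h32 : ψ t ^ (3 / 2 : ℝ) = √(ψ t) * ψ t := by
      rw [show (3 / 2 : ℝ) = 1 / 2 + 1 by norm_num, Real.rpow_add hψt, Real.rpow_one,
        Real.sqrt_eq_rpow]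
    have h2s : 0 < 2 * √(ψ t) := by positivity
    rw [Real.sq_sqrt hψt.le, Real.norm_eq_abs, abs_div, abs_neg, abs_div, abs_of_pos hψt,
      abs_of_pos h2s, div_div, div_le_one (mul_pos h2s hψt)]
    linarith [h32 ▸ hsc t ht]
  have hlip := (convex_Icc (0 : ℝ) 1).norm_image_sub_le_of_norm_hasDerivWithin_le
    (fun t ht => (hderiv t ht).hasDerivWithinAt) hbound hτ (right_mem_Icc.2 zero_le_one)
  have hΔpos : 0 < Δ := hΔ.lt_of_ne <| by
    rintro rfl
    simpa [hψ₁] using hpos 1 (right_mem_Icc.2 zero_le_one)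
  rw [hψ₁, Real.sqrt_sq hΔ, Real.norm_eq_abs, Real.norm_eq_abs,
    abs_of_nonneg (sub_nonneg.2 hτ.2), one_mul] at hlip
  have hden : 0 < 1 + Δ * (1 - τ) := by nlinarith [mul_nonneg hΔ (sub_nonneg.2 hτ.2)]
  have hinv : (√(ψ τ))⁻¹ ≤ (1 + Δ * (1 - τ)) / Δ := by
    rw [add_div, one_div, mul_div_cancel_left₀ _ hΔpos.ne']
    linarith [neg_abs_le (Δ⁻¹ - (√(ψ τ))⁻¹)]
  have hroot : Δ / (1 + Δ * (1 - τ)) ≤ √(ψ τ) := by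
    rwa [inv_le_comm₀ (Real.sqrt_pos.2 (hpos τ hτ)) (div_pos hden hΔpos), inv_div] at hinv
  calc Δ ^ 2 / (1 + Δ * (1 - τ)) ^ 2 = (Δ / (1 + Δ * (1 - τ))) ^ 2 := (div_pow ..).symm
    _ ≤ √(ψ τ) ^ 2 := pow_le_pow_left₀ (div_nonneg hΔ hden.le) hroot 2
    _ = ψ τ := Real.sq_sqrt (hpos τ hτ).le

theorem sq_div_one_add_le_integral (hpos : ∀ τ ∈ Icc (0 : ℝ) 1, 0 < ψ τ)
    (hψ : ∀ τ ∈ Icc (0 : ℝ) 1, HasDerivAt ψ (dψ τ) τ)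
    (hsc : ∀ τ ∈ Icc (0 : ℝ) 1, |dψ τ| ≤ 2 * ψ τ ^ (3 / 2 : ℝ))
    (hΔ : 0 ≤ Δ) (hψ₁ : ψ 1 = Δ ^ 2) :
    Δ ^ 2 / (1 + Δ) ≤ ∫ τ in (0 : ℝ)..1, ψ τ := by
  have hψint : IntervalIntegrable ψ MeasureTheory.volume 0 1 :=
    ContinuousOn.intervalIntegrable fun τ hτ =>
      (hψ τ (by rwa [uIcc_of_le zero_le_one] at hτ)).continuousAt.continuousWithinAt
  have hlowint : IntervalIntegrable (fun τ : ℝ => Δ ^ 2 / (1 + Δ * (1 - τ)) ^ 2)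
      MeasureTheory.volume 0 1 := by
    refine (continuousOn_const.div (by fun_prop) fun τ hτ => ?_).intervalIntegrable
    rw [uIcc_of_le zero_le_one] at hτ
    nlinarith [mul_nonneg hΔ (sub_nonneg.2 hτ.2)]
  rw [← integral_sq_div_one_add_mul_sub_sq hΔ]
  exact intervalIntegral.integral_mono_on zero_le_one hlowint hψint
    fun τ hτ => sq_div_one_add_mul_sub_sq_le hpos hψ hsc hΔ hψ₁ hτ

end Gronwall

section InnerProductSpace

variable {E : Type*} [NormedAddCommGroup E] [InnerProductSpace ℝ E]

theorem ContinuousLinearMap.IsPositive.inner_apply_sq_le {H : E →L[ℝ] E} (hH : H.IsPositive)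
    (x y : E) : ⟪x, H y⟫ ^ 2 ≤ ⟪x, H x⟫ * ⟪y, H y⟫ := by
  have hquad : ∀ s : ℝ, 0 ≤ ⟪x, H x⟫ * (s * s) + 2 * ⟪x, H y⟫ * s + ⟪y, H y⟫ := by
    intro s
    have hyx : ⟪y, H x⟫ = ⟪x, H y⟫ := by
      rw [← hH.inner_left_eq_inner_right, real_inner_comm]
    have := hH.inner_nonneg_right (y + s • x)
    simp only [map_add, map_smul, inner_add_left, inner_add_right, real_inner_smul_left,
      real_inner_smul_right, hyx] at this
    linarith
  have := discrim_le_zero hquad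
  rw [discrim] at this
  linarith

theorem ContinuousLinearMap.isPositive_of_forall_inner_pos {H : E →L[ℝ] E}
    (hsymm : H.IsSymmetric) (hpd : ∀ u, u ≠ 0 → 0 < ⟪u, H u⟫) : H.IsPositive := by
  refine (H.isPositive_iff).2 ⟨hsymm, fun u => ?_⟩
  rcases eq_or_ne u 0 with rfl | hu
  · simp
  · exact real_inner_comm (H u) u ▸ (hpd u hu).le

theorem ContinuousLinearMap.isInvertible_of_forall_inner_pos [FiniteDimensional ℝ E]
    {H : E →L[ℝ] E} (hpd : ∀ u, u ≠ 0 → 0 < ⟪u, H u⟫) : H.IsInvertible := by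
  have hinj : Function.Injective H := by
    refine (injective_iff_map_eq_zero H).2 fun u hu => ?_
    by_contra h
    simpa [hu] using hpd u h
  exact ⟨(LinearEquiv.ofInjectiveEndo (H : E →ₗ[ℝ] E) hinj).toContinuousLinearEquiv, rfl⟩

theorem IsMinOn.mul_sub_le_inner_gradient [CompleteSpace E] {f g : E → ℝ} {s : Set E} {c : ℝ}
    {x y : E} (hmin : IsMinOn (fun z => f z + c * g z) s x) (hg : ConvexOn ℝ s g)
    (hc : 0 ≤ c) (hx : x ∈ s) (hy : y ∈ s) (hf : DifferentiableAt ℝ f x) :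
    c * (g x - g y) ≤ ⟪gradient f x, y - x⟫ := by
  have hline : HasDerivAt (fun τ : ℝ => f (x + τ • (y - x))) ⟪gradient f x, y - x⟫ 0 := by
    have := hf.hasFDerivAt.comp_hasDerivAt_of_eq (0 : ℝ)
      (((hasDerivAt_id (0 : ℝ)).smul_const (y - x)).const_add x) (by simp)
    rw [one_smul, ← inner_gradient_left] at this
    exact this
  refine le_of_hasDerivAt_of_forall_mul_le_sub hline fun τ hτ => ?_
  have hmem : x + τ • (y - x) ∈ s := hg.1.add_smul_sub_mem hx hy ⟨hτ.1.le, hτ.2⟩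
  have hconv : g (x + τ • (y - x)) ≤ (1 - τ) * g x + τ * g y := by
    have := hg.2 hx hy (sub_nonneg.2 hτ.2) hτ.1.le (by ring)
    rwa [show (1 - τ) • x + τ • y = x + τ • (y - x) by module, smul_eq_mul, smul_eq_mul] at this
  have := mul_le_mul_of_nonneg_left hconv hc
  have := isMinOn_iff.1 hmin _ hmem
  simp only [zero_smul, add_zero]
  nlinarith

theorem mul_inner_gradient_le_of_isMinOn [CompleteSpace E] {f g : E → ℝ} {s : Set E}
    {t₀ t₁ : ℝ} {x₀ x₁ : E}
    (hmin₀ : IsMinOn (fun z => f z + t₀⁻¹ * g z) s x₀)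
    (hmin₁ : IsMinOn (fun z => f z + t₁⁻¹ * g z) s x₁) (hg : ConvexOn ℝ s g)
    (ht₀ : 0 < t₀) (ht₁ : 0 < t₁) (hx₀ : x₀ ∈ s) (hx₁ : x₁ ∈ s)
    (hf₀ : DifferentiableAt ℝ f x₀) (hf₁ : DifferentiableAt ℝ f x₁) :
    t₁ * ⟪gradient f x₁, x₁ - x₀⟫ ≤ t₀ * ⟪gradient f x₀, x₁ - x₀⟫ := by
  have h₀ := hmin₀.mul_sub_le_inner_gradient hg (inv_nonneg.2 ht₀.le) hx₀ hx₁ hf₀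
  have h₁ := hmin₁.mul_sub_le_inner_gradient hg (inv_nonneg.2 ht₁.le) hx₁ hx₀ hf₁
  rw [← neg_sub x₁, inner_neg_right] at h₁
  have e₀ := mul_le_mul_of_nonneg_left h₀ ht₀.le
  have e₁ := mul_le_mul_of_nonneg_left h₁ ht₁.le
  rw [← mul_assoc, mul_inv_cancel₀ ht₀.ne', one_mul] at e₀
  rw [← mul_assoc, mul_inv_cancel₀ ht₁.ne', one_mul] at e₁
  linarith

theorem ContDiffAt.isSymmetric_of_hasFDerivAt_gradient [CompleteSpace E] {f : E → ℝ} {x : E}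
    {H : E →L[ℝ] E} (hf : ContDiffAt ℝ 2 f x) (hH : HasFDerivAt (gradient f) H x) :
    H.IsSymmetric := by
  have hD : HasFDerivAt (fderiv ℝ f) (fderiv ℝ (fderiv ℝ f) x) x :=
    ((hf.fderiv_right le_rfl).differentiableAt one_ne_zero).hasFDerivAt
  have hentry : ∀ a b, fderiv ℝ (fderiv ℝ f) x a b = ⟪H a, b⟫ := by
    intro a b
    have h₁ := (ContinuousLinearMap.apply ℝ ℝ b).hasFDerivAt.comp x hD
    have hcomp : (fun y => fderiv ℝ f y b) = innerSL ℝ b ∘ gradient f := by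
      ext y
      rw [Function.comp_apply, innerSL_apply_apply, real_inner_comm, inner_gradient_left]
    have h₂ := hcomp ▸ (innerSL ℝ b).hasFDerivAt.comp x hH
    simpa [real_inner_comm] using congr($(h₁.unique h₂) a)
  intro a b
  change ⟪H a, b⟫ = ⟪a, H b⟫
  rw [← hentry, hf.isSymmSndFDerivAt (by simp), hentry, real_inner_comm]

end InnerProductSpace

section LocalNorm

variable {n : ℕ} {H : EuclideanSpace ℝ (Fin n) →L[ℝ] EuclideanSpace ℝ (Fin n)}

theorem abs_inner_le_dualLocNorm_mul_locNorm (hH : H.IsPositive) (hinv : H.IsInvertible)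
    (v h : EuclideanSpace ℝ (Fin n)) : |⟪v, h⟫| ≤ dualLocNorm H v * locNorm H h := by
  set u := H.inverse v
  have hv : H u = v := hinv.self_apply_inverse v
  have hdual : ⟪v, H.inverse v⟫ = ⟪u, H u⟫ := by rw [hv, real_inner_comm]
  rw [dualLocNorm, locNorm, hdual, ← Real.sqrt_mul (hH.inner_nonneg_right u)]
  apply Real.abs_le_sqrt
  rw [← hv, real_inner_comm]
  simpa only [mul_comm] using hH.inner_apply_sq_le h u

theorem dualLocNorm_le_sqrt (hinv : H.IsInvertible) {v : EuclideanSpace ℝ (Fin n)} {ν : ℝ}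
    (hν : ∀ u, 2 * ⟪v, u⟫ - ⟪u, H u⟫ ≤ ν) : dualLocNorm H v ≤ √ν := by
  have := hν (H.inverse v)
  rw [hinv.self_apply_inverse] at this
  exact Real.sqrt_le_sqrt (by linarith [real_inner_comm v (H.inverse v)])

end LocalNorm

theorem StandardSelfConcordantOn.sq_div_one_add_locNorm_le_inner_gradient_sub {n : ℕ}
    {f : EuclideanSpace ℝ (Fin n) → ℝ} {s : Set (EuclideanSpace ℝ (Fin n))}
    {hess : EuclideanSpace ℝ (Fin n) → EuclideanSpace ℝ (Fin n) →L[ℝ] EuclideanSpace ℝ (Fin n)}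
    (hsc : StandardSelfConcordantOn f s) (hs : IsOpen s) (hs' : Convex ℝ s)
    (hf : ContDiffOn ℝ 3 f s) (hhess : ∀ x ∈ s, HasFDerivAt (fun y => gradient f y) (hess x) x)
    (hpd : ∀ x ∈ s, ∀ u, u ≠ 0 → 0 < ⟪u, hess x u⟫) {x y : EuclideanSpace ℝ (Fin n)}
    (hx : x ∈ s) (hy : y ∈ s) :
    locNorm (hess y) (y - x) ^ 2 / (1 + locNorm (hess y) (y - x)) ≤
      ⟪gradient f y - gradient f x, y - x⟫ := by
  set h := y - x
  rcases eq_or_ne h 0 with h0 | h0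
  · simp [h0, locNorm]
  set U := {r : ℝ | x + r • h ∈ s}
  have hU : IsOpen U := hs.preimage (by fun_prop)
  have hIcc : Icc (0 : ℝ) 1 ⊆ U := fun r hr => hs'.add_smul_sub_mem hx hy hr
  set F := fun r : ℝ => f (x + r • h)
  set φ := fun r : ℝ => ⟪h, gradient f (x + r • h)⟫
  set ψ := fun r : ℝ => ⟪h, hess (x + r • h) h⟫
  have hline : ∀ r : ℝ, HasDerivAt (fun r : ℝ => x + r • h) h r := fun r => by
    simpa using ((hasDerivAt_id r).smul_const h).const_add x
  have hF : ∀ r ∈ U, HasDerivAt F (φ r) r := by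
    intro r hr
    have hdiff := (hf.contDiffAt (hs.mem_nhds hr)).differentiableAt (by norm_num)
    have := hdiff.hasFDerivAt.comp_hasDerivAt r (hline r)
    rw [← inner_gradient_left, real_inner_comm] at this
    exact this
  have hφ : ∀ r ∈ U, HasDerivAt φ (ψ r) r := by
    intro r hr
    have hgrad := (hhess _ hr).comp_hasDerivAt r (hline r)
    exact (innerSL ℝ h).hasFDerivAt.comp_hasDerivAt r hgrad
  have hψ₂ := iteratedDeriv_two_eqOn hU hF hφ
  have hF₃ : ContDiffOn ℝ 3 F U := hf.comp (by fun_prop) fun r hr => hr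
  have hψ : ∀ τ ∈ Icc (0 : ℝ) 1, HasDerivAt ψ (iteratedDeriv 3 F τ) τ := fun τ hτ =>
    hasDerivAt_iteratedDeriv_three hU hF₃ hψ₂ (hIcc hτ)
  have hψ₁ : ψ 1 = locNorm (hess y) h ^ 2 := by
    have hxy : x + (1 : ℝ) • h = y := by simp [h]
    simp only [ψ, hxy, locNorm]
    rw [Real.sq_sqrt (hpd y hy h h0).le]
  calc locNorm (hess y) h ^ 2 / (1 + locNorm (hess y) h)
      ≤ ∫ τ in (0 : ℝ)..1, ψ τ :=
        sq_div_one_add_le_integral (fun τ hτ => hpd _ (hIcc hτ) h h0) hψ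
          (fun τ hτ => hψ₂ (hIcc hτ) ▸ hsc x hx h τ (hIcc hτ)) (Real.sqrt_nonneg _) hψ₁
    _ = φ 1 - φ 0 := by
        have hmem : ∀ τ ∈ uIcc (0 : ℝ) 1, τ ∈ Icc (0 : ℝ) 1 := fun τ hτ => by
          rwa [uIcc_of_le zero_le_one] at hτ
        exact intervalIntegral.integral_eq_sub_of_hasDerivAt (fun τ hτ => hφ τ (hIcc (hmem τ hτ)))
          (ContinuousOn.intervalIntegrable fun τ hτ =>
            (hψ τ (hmem τ hτ)).continuousAt.continuousWithinAt)
    _ = ⟪gradient f y - gradient f x, h⟫ := by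
        simp [φ, h, inner_sub_left]

theorem div_one_add_le_of_sq_div_one_add_le_sub {Δ D a b t₀ t₁ : ℝ} (hΔ : 0 ≤ Δ) (hD : 0 ≤ D)
    (ht₀ : 0 < t₀) (hgap : Δ ^ 2 / (1 + Δ) ≤ a - b) (hmove : t₁ * a ≤ t₀ * b)
    (ha : |a| ≤ D * Δ) : Δ / (1 + Δ) ≤ |t₁ - t₀| / t₀ * D := by
  have hmul : Δ * (t₀ * (Δ / (1 + Δ))) ≤ Δ * (|t₁ - t₀| * D) :=
    calc Δ * (t₀ * (Δ / (1 + Δ))) = t₀ * (Δ ^ 2 / (1 + Δ)) := by ring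
      _ ≤ (t₀ - t₁) * a := by nlinarith
      _ ≤ |t₁ - t₀| * |a| := by rw [abs_sub_comm, ← abs_mul]; exact le_abs_self _
      _ ≤ |t₁ - t₀| * (D * Δ) := by gcongr
      _ = Δ * (|t₁ - t₀| * D) := by ring
  rcases hΔ.eq_or_lt with rfl | hΔpos
  · simp only [zero_div]
    positivity
  · rw [div_mul_eq_mul_div, le_div_iff₀ ht₀, mul_comm _ t₀]
    exact le_of_mul_le_mul_left hmul hΔpos

theorem le_div_sub_of_div_one_add_le_div {Δ ρ t : ℝ} (hΔ : 0 ≤ Δ) (ht : 0 < t) (hρ : ρ < t)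
    (h : Δ / (1 + Δ) ≤ ρ / t) : Δ ≤ ρ / (t - ρ) := by
  rw [div_le_div_iff₀ (by positivity) ht] at h
  rw [le_div_iff₀ (by linarith)]
  nlinarith

theorem stmt11_general {n : ℕ} (ν : ℝ)
    (f g : EuclideanSpace ℝ (Fin n) → ℝ)
    (df dg : Set (EuclideanSpace ℝ (Fin n)))
    (hdf_open : IsOpen df) (hdf_conv : Convex ℝ df)
    (hf_smooth : ContDiffOn ℝ 3 f df)
    (hf_sc : StandardSelfConcordantOn f df)
    (hess : EuclideanSpace ℝ (Fin n) →
      EuclideanSpace ℝ (Fin n) →L[ℝ] EuclideanSpace ℝ (Fin n))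
    (hhess : ∀ x ∈ df, HasFDerivAt (fun y => gradient f y) (hess x) x)
    (hpd : ∀ x ∈ df, ∀ u : EuclideanSpace ℝ (Fin n), u ≠ 0 → 0 < ⟪u, hess x u⟫)
    -- `f` is a `ν`-self-concordant barrier
    (hbarrier : ∀ x ∈ df, ∀ u : EuclideanSpace ℝ (Fin n),
      2 * ⟪gradient f x, u⟫ - ⟪u, hess x u⟫ ≤ ν)
    (hg_cvx : ConvexOn ℝ dg g)
    (tk tk1 : ℝ) (htk : 0 < tk) (htk1 : 0 < tk1)
    -- `x*_{t_k}` is the unique minimizer of `F(·; t_k)`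
    (xsk : EuclideanSpace ℝ (Fin n)) (hxsk : xsk ∈ df ∩ dg)
    (hmink : ∀ x ∈ df ∩ dg, f xsk + tk⁻¹ * g xsk ≤ f x + tk⁻¹ * g x)
    -- `x*_{t_{k+1}}` is the unique minimizer of `F(·; t_{k+1})`
    (xsk1 : EuclideanSpace ℝ (Fin n)) (hxsk1 : xsk1 ∈ df ∩ dg)
    (hmink1 : ∀ x ∈ df ∩ dg, f xsk1 + tk1⁻¹ * g xsk1 ≤ f x + tk1⁻¹ * g x)
    (Δ : ℝ) (hΔ_def : Δ = locNorm (hess xsk1) (xsk1 - xsk)) :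
    Δ / (1 + Δ) ≤ (|tk1 - tk| / tk) * dualLocNorm (hess xsk1) (gradient f xsk1) ∧
    (|tk1 - tk| / tk) * dualLocNorm (hess xsk1) (gradient f xsk1) ≤
      (|tk1 - tk| / tk) * Real.sqrt ν ∧
    (|tk1 - tk| * Real.sqrt ν < tk →
      Δ ≤ |tk1 - tk| * Real.sqrt ν / (tk - |tk1 - tk| * Real.sqrt ν)) := by
  have hdiff : ∀ x ∈ df, ContDiffAt ℝ 3 f x := fun x hx =>
    hf_smooth.contDiffAt (hdf_open.mem_nhds hx)
  set H := hess xsk1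
  have hHpos : H.IsPositive := H.isPositive_of_forall_inner_pos
    (((hdiff xsk1 hxsk1.1).of_le (by norm_num)).isSymmetric_of_hasFDerivAt_gradient
      (hhess xsk1 hxsk1.1)) (hpd xsk1 hxsk1.1)
  have hHinv : H.IsInvertible := H.isInvertible_of_forall_inner_pos (hpd xsk1 hxsk1.1)
  have hΔ0 : 0 ≤ Δ := hΔ_def ▸ Real.sqrt_nonneg _
  have hgap : Δ ^ 2 / (1 + Δ) ≤ ⟪gradient f xsk1, xsk1 - xsk⟫ - ⟪gradient f xsk, xsk1 - xsk⟫ :=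
    inner_sub_left (𝕜 := ℝ) (gradient f xsk1) _ (xsk1 - xsk) ▸ hΔ_def ▸
      hf_sc.sq_div_one_add_locNorm_le_inner_gradient_sub hdf_open hdf_conv hf_smooth hhess hpd
        hxsk.1 hxsk1.1
  have hmove : tk1 * ⟪gradient f xsk1, xsk1 - xsk⟫ ≤ tk * ⟪gradient f xsk, xsk1 - xsk⟫ :=
    mul_inner_gradient_le_of_isMinOn (isMinOn_iff.2 hmink) (isMinOn_iff.2 hmink1)
      (hg_cvx.subset inter_subset_right (hdf_conv.inter hg_cvx.1)) htk htk1 hxsk hxsk1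
      ((hdiff xsk hxsk.1).differentiableAt (by norm_num))
      ((hdiff xsk1 hxsk1.1).differentiableAt (by norm_num))
  have key : Δ / (1 + Δ) ≤ |tk1 - tk| / tk * dualLocNorm H (gradient f xsk1) :=
    div_one_add_le_of_sq_div_one_add_le_sub hΔ0 (Real.sqrt_nonneg _) htk hgap hmove
      (hΔ_def ▸ abs_inner_le_dualLocNorm_mul_locNorm hHpos hHinv _ _)
  have hbound := mul_le_mul_of_nonneg_left (dualLocNorm_le_sqrt hHinv (hbarrier xsk1 hxsk1.1))
    (div_nonneg (abs_nonneg (tk1 - tk)) htk.le)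
  refine ⟨key, hbound, fun hsmall => le_div_sub_of_div_one_add_le_div hΔ0 htk hsmall ?_⟩
  rw [← div_mul_eq_mul_div]
  exact key.trans hbound

/-- Lemma 4.2: for the minimizers `x*_{t_k}`, `x*_{t_{k+1}}` of the penalized
problems with parameters `t_k, t_{k+1} > 0`, `d_k = t_{k+1} − t_k`, and
`Δ_k = ‖x*_{t_{k+1}} − x*_{t_k}‖_{x*_{t_{k+1}}} < 1`, one has
`Δ_k/(1+Δ_k) ≤ (|d_k|/t_k)·‖∇f(x*_{t_{k+1}})‖*_{x*_{t_{k+1}}} ≤ (|d_k|/t_k)·√ν`, and if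
`|d_k|·√ν < t_k` then `Δ_k ≤ |d_k|√ν/(t_k − |d_k|√ν)`. -/
theorem stmt11 {n : ℕ} (ν : ℝ) (hν : 0 < ν)
    (f g : EuclideanSpace ℝ (Fin n) → ℝ)
    (df dg : Set (EuclideanSpace ℝ (Fin n)))
    (hdf_open : IsOpen df) (hdf_conv : Convex ℝ df)
    (hf_smooth : ContDiffOn ℝ 3 f df)
    (hf_sc : StandardSelfConcordantOn f df)
    (hess : EuclideanSpace ℝ (Fin n) →
      EuclideanSpace ℝ (Fin n) →L[ℝ] EuclideanSpace ℝ (Fin n))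
    (hhess : ∀ x ∈ df, HasFDerivAt (fun y => gradient f y) (hess x) x)
    (hpd : ∀ x ∈ df, ∀ u : EuclideanSpace ℝ (Fin n), u ≠ 0 → 0 < ⟪u, hess x u⟫)
    -- `f` is a `ν`-self-concordant barrier
    (hbarrier : ∀ x ∈ df, ∀ u : EuclideanSpace ℝ (Fin n),
      2 * ⟪gradient f x, u⟫ - ⟪u, hess x u⟫ ≤ ν)
    (hg_cvx : ConvexOn ℝ dg g) (hg_lsc : LowerSemicontinuousOn g dg)
    (hg_proper : dg.Nonempty)
    (tk tk1 : ℝ) (htk : 0 < tk) (htk1 : 0 < tk1)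
    -- `x*_{t_k}` is the unique minimizer of `F(·; t_k)`
    (xsk : EuclideanSpace ℝ (Fin n)) (hxsk : xsk ∈ df ∩ dg)
    (hmink : ∀ x ∈ df ∩ dg, f xsk + tk⁻¹ * g xsk ≤ f x + tk⁻¹ * g x)
    (huniqk : ∀ x ∈ df ∩ dg,
      (∀ y ∈ df ∩ dg, f x + tk⁻¹ * g x ≤ f y + tk⁻¹ * g y) → x = xsk)
    -- `x*_{t_{k+1}}` is the unique minimizer of `F(·; t_{k+1})`
    (xsk1 : EuclideanSpace ℝ (Fin n)) (hxsk1 : xsk1 ∈ df ∩ dg)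
    (hmink1 : ∀ x ∈ df ∩ dg, f xsk1 + tk1⁻¹ * g xsk1 ≤ f x + tk1⁻¹ * g x)
    (huniqk1 : ∀ x ∈ df ∩ dg,
      (∀ y ∈ df ∩ dg, f x + tk1⁻¹ * g x ≤ f y + tk1⁻¹ * g y) → x = xsk1)
    (Δ : ℝ) (hΔ_def : Δ = locNorm (hess xsk1) (xsk1 - xsk)) (hΔ : Δ < 1) :
    Δ / (1 + Δ) ≤ (|tk1 - tk| / tk) * dualLocNorm (hess xsk1) (gradient f xsk1) ∧
    (|tk1 - tk| / tk) * dualLocNorm (hess xsk1) (gradient f xsk1) ≤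
      (|tk1 - tk| / tk) * Real.sqrt ν ∧
    (|tk1 - tk| * Real.sqrt ν < tk →
      Δ ≤ |tk1 - tk| * Real.sqrt ν / (tk - |tk1 - tk| * Real.sqrt ν)) :=
  stmt11_general ν f g df dg hdf_open hdf_conv hf_smooth hf_sc hess hhess hpd hbarrier hg_cvx tk tk1
    htk htk1 xsk hxsk hmink xsk1 hxsk1 hmink1 Δ hΔ_def
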